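/- For every real b0 ≥ 0 and every even positive integer l, the supremum of ((b0 - x)^l + 1)/(x^l + 1) over x in (0, 1] equals b0^l + 1. -/
import Mathlib

open Filter Set Topology

theorem stmt_1 (b0 : ℝ) (hb : 0 ≤ b0) (l : ℕ) (hl : 0 < l) (hev : Even l) :
    sSup ((fun x : ℝ => ((b0 - x) ^ l + 1) / (x ^ l + 1)) '' Set.Ioc 0 1) = b0 ^ l + 1 := by
  set f : ℝ → ℝ := fun x : ℝ => ((b0 - x) ^ l + 1) / (x ^ l + 1) with hf
  have hub : ∀ x ∈ Set.Ioc (0:ℝ) 1, f x ≤ b0 ^ l + 1 := by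
    intro x hx
    have hx0 : 0 < x := hx.1
    have hden : 0 < x ^ l + 1 := by positivity
    rw [hf]
    rw [div_le_iff₀ hden]
    have h1 : (b0 - x) ^ l ≤ b0 ^ l + x ^ l := by
      have habs : |b0 - x| ≤ max b0 x := by
        rw [abs_sub_le_iff]
        constructor
        · exact le_trans (by linarith) (le_max_left _ _)
        · exact le_trans (by linarith) (le_max_right _ _)
      calc (b0 - x) ^ l = |b0 - x| ^ l := (hev.pow_abs _).symm
        _ ≤ (max b0 x) ^ l := pow_le_pow_left₀ (abs_nonneg _) habs l
        _ ≤ b0 ^ l + x ^ l := by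
            rcases max_cases b0 x with ⟨h, _⟩ | ⟨h, _⟩ <;> rw [h] <;>
              nlinarith [pow_nonneg hb l, pow_nonneg hx0.le l]
    nlinarith [mul_nonneg (pow_nonneg hb l) (pow_nonneg hx0.le l)]
  have hbdd : BddAbove (f '' Set.Ioc 0 1) := by
    refine ⟨b0 ^ l + 1, ?_⟩
    rintro y ⟨x, hx, rfl⟩
    exact hub x hx
  have hne : (f '' Set.Ioc 0 1).Nonempty := ⟨f 1, ⟨1, ⟨zero_lt_one, le_refl 1⟩, rfl⟩⟩
  have hnb : (𝓝[Set.Ioc (0:ℝ) 1] 0).NeBot := by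
    rw [← mem_closure_iff_nhdsWithin_neBot, closure_Ioc (one_ne_zero).symm]
    exact ⟨le_refl 0, zero_le_one⟩
  have htend : Tendsto f (𝓝[Set.Ioc (0:ℝ) 1] 0) (𝓝 (b0 ^ l + 1)) := by
    have hc : ContinuousAt f 0 := by
      apply ContinuousAt.div
      · fun_prop
      · fun_prop
      · simp [zero_pow hl.ne']
    have := hc.tendsto.mono_left (nhdsWithin_le_nhds (s := Set.Ioc (0:ℝ) 1))
    simpa [hf, zero_pow hl.ne'] using this
  apply le_antisymm
  · exact csSup_le hne (by rintro y ⟨x, hx, rfl⟩; exact hub x hx)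
  · refine le_of_tendsto htend ?_
    filter_upwards [self_mem_nhdsWithin] with x hx
    exact le_csSup hbdd ⟨x, hx, rfl⟩
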